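/- Let a := √(2/5) and M := 0. Then: (i) with ε = −1, the function k(t) = 3a·tanh(a·t) satisfies on ℝ both space extremal equations (E1): k''' + (3/2)k·k'' + (1/2)(k')² + (1/2)k²·k' − (1/5)ε·k' + (6/5)M' = 0 and (E2): k'' + (2/3)k·k' + (5/6)ε·k'·M − (3/2)ε·k·M' − ε·M'' = 0; (ii) with ε = 1, the function k(t) = −3a·tan(a·t) satisfies both (E1) and (E2) on every open interval on which tan(a·t) is defined. -/

import Mathlib

/-- The first space extremal equation (E1) at a point `t`. -/
def SpaceExtremalEq1 (ε : ℝ) (k M : ℝ → ℝ) (t : ℝ) : Prop :=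
  iteratedDeriv 3 k t + (3/2) * k t * iteratedDeriv 2 k t
    + (1/2) * (deriv k t)^2 + (1/2) * (k t)^2 * deriv k t
    - (1/5) * ε * deriv k t + (6/5) * deriv M t = 0

/-- The second space extremal equation (E2) at a point `t`. -/
def SpaceExtremalEq2 (ε : ℝ) (k M : ℝ → ℝ) (t : ℝ) : Prop :=
  iteratedDeriv 2 k t + (2/3) * k t * deriv k t + (5/6) * ε * deriv k t * M t
    - (3/2) * ε * k t * deriv M t - ε * iteratedDeriv 2 M t = 0

/-!
With `M ≡ 0`, both equations follow from the Riccati equation `k' = -k²/3 - 6ε/5`: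
differentiating it gives `k'' = -(2/3) k k'`, which is (E2), and differentiating once more
turns the left-hand side of (E1) into `-(1/6) k' (k' + k²/3 + 6ε/5)`. Both `3a tanh(at)`
(for `ε = -1`) and `-3a tan(at)` (for `ε = 1`) solve that Riccati equation when `3a² = 6/5`.
-/

open Filter Topology

section Riccati

variable {k : ℝ → ℝ} {c t : ℝ}

lemma eventually_hasDerivAt_deriv_of_riccati
    (h : ∀ᶠ u in 𝓝 t, HasDerivAt k (-(k u) ^ 2 / 3 - c) u) :
    ∀ᶠ u in 𝓝 t, HasDerivAt (deriv k) (2 / 3 * k u * ((k u) ^ 2 / 3 + c)) u := by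
  filter_upwards [h.eventually_nhds] with u hu
  have hderiv : deriv k =ᶠ[𝓝 u] fun v => -(k v) ^ 2 / 3 - c := by
    filter_upwards [hu] with v hv using hv.deriv
  have hk := hu.self_of_nhds
  exact (((hk.pow 2).neg.div_const 3).sub_const c).congr_of_eventuallyEq hderiv
    |>.congr_deriv (by ring)

lemma iteratedDeriv_two_eventuallyEq_of_riccati
    (h : ∀ᶠ u in 𝓝 t, HasDerivAt k (-(k u) ^ 2 / 3 - c) u) :
    iteratedDeriv 2 k =ᶠ[𝓝 t] fun u => 2 / 3 * k u * ((k u) ^ 2 / 3 + c) := by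
  filter_upwards [eventually_hasDerivAt_deriv_of_riccati h] with u hu
  rw [iteratedDeriv_succ, iteratedDeriv_one, hu.deriv]

lemma iteratedDeriv_three_of_riccati
    (h : ∀ᶠ u in 𝓝 t, HasDerivAt k (-(k u) ^ 2 / 3 - c) u) :
    iteratedDeriv 3 k t = -(2 / 3) * ((k t) ^ 2 + c) * ((k t) ^ 2 / 3 + c) := by
  have hk := h.self_of_nhds
  rw [iteratedDeriv_succ, (iteratedDeriv_two_eventuallyEq_of_riccati h).deriv_eq]
  have := (hk.const_mul (2 / 3)).mul (((hk.pow 2).div_const 3).add_const c)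
  exact this.deriv.trans (by simp only [Pi.pow_apply]; ring)

theorem spaceExtremalEq_of_riccati {ε : ℝ}
    (h : ∀ᶠ u in 𝓝 t, HasDerivAt k (-(k u) ^ 2 / 3 - 6 / 5 * ε) u) :
    SpaceExtremalEq1 ε k (fun _ => 0) t ∧ SpaceExtremalEq2 ε k (fun _ => 0) t := by
  have d1 := h.self_of_nhds.deriv
  have d2 := (iteratedDeriv_two_eventuallyEq_of_riccati h).self_of_nhds
  have d3 := iteratedDeriv_three_of_riccati h
  simp only [SpaceExtremalEq1, SpaceExtremalEq2, deriv_const, iteratedDeriv_const,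
    OfNat.ofNat_ne_zero, if_false]
  rw [d1, d2, d3]
  constructor <;> ring

end Riccati

lemma hasDerivAt_tanh (x : ℝ) : HasDerivAt Real.tanh (1 - Real.tanh x ^ 2) x := by
  have hcosh : Real.cosh x ≠ 0 := (Real.cosh_pos x).ne'
  rw [show Real.tanh = fun y => Real.sinh y / Real.cosh y from
    funext Real.tanh_eq_sinh_div_cosh]
  refine ((Real.hasDerivAt_sinh x).div (Real.hasDerivAt_cosh x) hcosh).congr_deriv ?_
  field_simp

lemma hasDerivAt_three_mul_tanh (a u : ℝ) :
    HasDerivAt (fun u => 3 * a * Real.tanh (a * u))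
      (-(3 * a * Real.tanh (a * u)) ^ 2 / 3 + 3 * a ^ 2) u := by
  have := ((hasDerivAt_tanh (a * u)).comp u ((hasDerivAt_id u).const_mul a)).const_mul (3 * a)
  exact this.congr_deriv (by ring)

lemma hasDerivAt_neg_three_mul_tan {a u : ℝ} (hu : Real.cos (a * u) ≠ 0) :
    HasDerivAt (fun u => -3 * a * Real.tan (a * u))
      (-(-3 * a * Real.tan (a * u)) ^ 2 / 3 - 3 * a ^ 2) u := by
  have := ((Real.hasDerivAt_tan hu).comp u ((hasDerivAt_id u).const_mul a)).const_mul (-3 * a)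
  refine this.congr_deriv ?_
  rw [Real.tan_eq_sin_div_cos]
  field_simp
  linear_combination a ^ 2 * Real.sin_sq_add_cos_sq (a * u)

/-- With `a = √(2/5)` and `M ≡ 0`: for `ε = −1` the function `3a·tanh(a·t)`
solves the space extremal equations on ℝ, and for `ε = 1` the function
`−3a·tan(a·t)` solves them wherever `tan(a·t)` is defined. -/
theorem stmt_17 :
    (∀ t : ℝ,
      SpaceExtremalEq1 (-1)
        (fun u => 3 * Real.sqrt (2/5) * Real.tanh (Real.sqrt (2/5) * u))
        (fun _ => 0) t ∧
      SpaceExtremalEq2 (-1)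
        (fun u => 3 * Real.sqrt (2/5) * Real.tanh (Real.sqrt (2/5) * u))
        (fun _ => 0) t) ∧
    (∀ t : ℝ, Real.cos (Real.sqrt (2/5) * t) ≠ 0 →
      SpaceExtremalEq1 1
        (fun u => -3 * Real.sqrt (2/5) * Real.tan (Real.sqrt (2/5) * u))
        (fun _ => 0) t ∧
      SpaceExtremalEq2 1
        (fun u => -3 * Real.sqrt (2/5) * Real.tan (Real.sqrt (2/5) * u))
        (fun _ => 0) t) := by
  have ha : Real.sqrt (2/5) ^ 2 = 2/5 := Real.sq_sqrt (by norm_num)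
  refine ⟨fun t => spaceExtremalEq_of_riccati (.of_forall fun u => ?_),
    fun t ht => spaceExtremalEq_of_riccati ?_⟩
  · exact (hasDerivAt_three_mul_tanh _ u).congr_deriv (by rw [ha]; ring)
  · have hopen : IsOpen {u : ℝ | Real.cos (Real.sqrt (2/5) * u) ≠ 0} :=
      isOpen_compl_singleton.preimage (by fun_prop)
    filter_upwards [hopen.mem_nhds ht] with u hu
    exact (hasDerivAt_neg_three_mul_tan hu).congr_deriv (by rw [ha]; ring)
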